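/- With P_n defined as above, u_n is a polynomial in P_1, …, P_n with rational coefficients, homogeneous of weighted degree n when P_j has degree j, and u_n = -(1/(2n)) P_n + (terms involving only P_1, …, P_{n-1}). Consequently ℚ[P_1,…,P_n] = ℚ[u_1,…,u_n] for every n. -/

import Mathlib

/-!
Write `U = t V`. The equation `u(U(t)) = t` determines the coefficients of `V` recursively as
polynomials in the `u_j`, and `t U'/U = 1 + t V'/V`, so `P_n` is the coefficient of `tⁿ` in
`(1 + t V'/V)²`. Over the polynomial ring in the `u_j`, with `u_j` of weight `j`, every coefficient
of `tᵐ` in these series is weighted homogeneous of degree `m`. Hence `u_n` is the only monomial of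
`P_n` involving `u_n`; its coefficient is read off with the Leibniz rule for "coefficient of `u_n`"
(the other factors contribute their constant terms), giving
`P_n = -2n u_n + (polynomial in u_1, …, u_{n-1})`. This triangular system is inverted by induction.
-/

open PowerSeries

noncomputable section

/-- Composition `f ∘ g` of formal power series (meaningful when `g` has zero constant term). -/
def psComp (f g : PowerSeries ℂ) : PowerSeries ℂ :=
  PowerSeries.mk fun n => ∑ k ∈ Finset.range (n + 1),
    PowerSeries.coeff k f * PowerSeries.coeff n (g ^ k)

/-- Inclusion of power series into the Laurent series field `ℂ((t))`. -/
def toLS (f : PowerSeries ℂ) : LaurentSeries ℂ := HahnSeries.ofPowerSeries ℤ ℂ f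

/-- The variable `t` of the Laurent series field. -/
def tLS : LaurentSeries ℂ := toLS PowerSeries.X

/-- The formal power series `u(z) = z(1 + Σ_{n≥1} c n · zⁿ)`. -/
def uSeries (c : ℕ → ℂ) : PowerSeries ℂ :=
  PowerSeries.mk fun k => if k = 0 then 0 else if k = 1 then 1 else c (k - 1)

/-- `P_n(u) = Res( (U'(t)/U(t))² t^{-n+1}, t = 0 )`, where `U` is the compositional
inverse of `u`. -/
def Pres (n : ℕ) (U : PowerSeries ℂ) : ℂ :=
  ((toLS (derivativeFun U) / toLS U) ^ 2 * tLS ^ (1 - (n : ℤ))).coeff (-1)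

open Finset

namespace MvPolynomial

variable {σ τ R M : Type*} [CommSemiring R]

theorem IsWeightedHomogeneous.aeval [AddCommMonoid M] {w : σ → M} {w' : τ → M}
    {φ : MvPolynomial σ R} {m : M} (hφ : φ.IsWeightedHomogeneous w m)
    {g : σ → MvPolynomial τ R} (hg : ∀ i, (g i).IsWeightedHomogeneous w' (w i)) :
    (aeval g φ).IsWeightedHomogeneous w' m := by
  rw [aeval_def, eval₂_eq]
  refine IsWeightedHomogeneous.sum _ _ _ fun d hd => ?_
  have hdeg : ∑ i ∈ d.support, d i • w i = m := hφ (mem_support_iff.mp hd)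
  have := (isWeightedHomogeneous_C w' (coeff d φ)).mul
    (IsWeightedHomogeneous.prod d.support _ _ fun i _ => (hg i).pow (d i))
  rwa [zero_add, hdeg] at this

theorem IsWeightedHomogeneous.of_rename {f : σ → τ} (hf : Function.Injective f)
    {w : τ → ℕ} {p : MvPolynomial σ R} {m : ℕ} (hp : (rename f p).IsWeightedHomogeneous w m) :
    p.IsWeightedHomogeneous (w ∘ f) m := by
  classical
  intro d hd
  have hmem : d.mapDomain f ∈ (rename f p).support := by
    rw [support_rename_of_injective hf]
    exact mem_image_of_mem _ (mem_support_iff.mpr hd)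
  rw [← hp (mem_support_iff.mp hmem)]
  unfold Finsupp.weight
  simp [Finsupp.linearCombination_mapDomain]

theorem IsWeightedHomogeneous.le_of_mem_vars {w : σ → ℕ} {p : MvPolynomial σ R} {m : ℕ}
    (hp : p.IsWeightedHomogeneous w m) {i : σ} (hi : i ∈ p.vars) : w i ≤ m := by
  classical
  obtain ⟨d, hd, hid⟩ := (mem_vars_iff_mem_support i).mp hi
  exact hp (mem_support_iff.mp hd) ▸
    Finsupp.le_weight_of_ne_zero' w (Finsupp.mem_support_iff.mp hid)

theorem IsWeightedHomogeneous.notMem_vars_of_coeff_single_eq_zero {w : σ → ℕ}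
    (hw : ∀ j, w j ≠ 0) {p : MvPolynomial σ R} {i : σ} (hp : p.IsWeightedHomogeneous w (w i))
    (h : coeff (Finsupp.single i 1) p = 0) : i ∉ p.vars := by
  classical
  intro hi
  obtain ⟨d, hd, hid⟩ := (mem_vars_iff_mem_support i).mp hi
  obtain ⟨e, rfl⟩ : ∃ e, d = Finsupp.single i 1 + e :=
    ⟨d - Finsupp.single i 1, (add_tsub_cancel_of_le (Finsupp.single_le_iff.mpr
      (Nat.one_le_iff_ne_zero.mpr (Finsupp.mem_support_iff.mp hid)))).symm⟩
  have he : Finsupp.weight w e = 0 := by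
    have := hp (mem_support_iff.mp hd)
    rw [map_add, Finsupp.weight_single, one_smul] at this
    omega
  have he0 : e = 0 := Finsupp.ext fun j => by
    by_contra hj
    exact hw j (Nat.le_zero.mp (he ▸ Finsupp.le_weight_of_ne_zero' w hj))
  rw [he0, add_zero] at hd
  exact mem_support_iff.mp hd h

theorem coeff_single_one_mul (i : σ) (p q : MvPolynomial σ R) :
    coeff (Finsupp.single i 1) (p * q) =
      coeff (Finsupp.single i 1) p * constantCoeff q +
        constantCoeff p * coeff (Finsupp.single i 1) q := by
  classical
  simp [coeff_mul, Finsupp.antidiagonal_single, constantCoeff, Nat.antidiagonal_succ, add_comm]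

theorem IsWeightedHomogeneous.vars_subset_range {p : MvPolynomial ℕ R} {m : ℕ}
    (hp : p.IsWeightedHomogeneous (fun j => j + 1) m) : p.vars ⊆ range m :=
  fun _ hi => mem_range.mpr (hp.le_of_mem_vars hi)

theorem IsWeightedHomogeneous.vars_subset_range_of_coeff_single_eq_zero {p : MvPolynomial ℕ R}
    {k : ℕ} (hp : p.IsWeightedHomogeneous (fun j => j + 1) (k + 1))
    (h : coeff (Finsupp.single k 1) p = 0) : p.vars ⊆ range k := fun i hi => by
  have hik := mem_range.mp (hp.vars_subset_range hi)
  have hne : i ≠ k := by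
    rintro rfl
    exact hp.notMem_vars_of_coeff_single_eq_zero (fun j => j.succ_ne_zero) h hi
  exact mem_range.mpr (by omega)

theorem IsWeightedHomogeneous.notMem_vars_add_smul_X {S : Type*} [CommRing S] {w : σ → ℕ}
    (hw : ∀ j, w j ≠ 0) {p : MvPolynomial σ S} {i : σ} (hp : p.IsWeightedHomogeneous w (w i))
    {b : S} (hb : coeff (Finsupp.single i 1) p = -b) : i ∉ (p + b • X i).vars := by
  refine (hp.add ?_).notMem_vars_of_coeff_single_eq_zero hw ?_
  · rw [smul_eq_C_mul]
    exact (isWeightedHomogeneous_X S w i).C_mul b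
  · simp [hb]

theorem aeval_aeval_eq_self {p s : σ → MvPolynomial σ R} {r : MvPolynomial σ R}
    (h : ∀ j ∈ r.vars, aeval p (s j) = X j) : aeval p (aeval s r) = r := by
  rw [aeval_eq_bind₁ s, aeval_bind₁]
  conv_rhs => rw [← aeval_X_left_apply r]
  rw [aeval_eq_eval₂Hom, aeval_eq_eval₂Hom]
  exact eval₂Hom_congr' rfl (fun j hj _ => h j hj) rfl

end MvPolynomial

theorem PowerSeries.coeff_X_mul_derivative {A : Type*} [CommSemiring A] (F : A⟦X⟧) (m : ℕ) :
    coeff m (X * d⁄dX A F) = m * coeff m F := by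
  cases m with
  | zero => simp
  | succ k => rw [coeff_succ_X_mul, coeff_derivative, mul_comm]; push_cast; rfl

section WeightedHomogeneousSeries

variable {σ R : Type*} [CommRing R] (w : σ → ℕ)

def weightedHomogeneousUpTo (N : ℕ) : Subring (MvPolynomial σ R)⟦X⟧ where
  carrier := {F | ∀ m ≤ N, (coeff m F).IsWeightedHomogeneous w m}
  mul_mem' {F G} hF hG m hm := by
    rw [coeff_mul]
    refine MvPolynomial.IsWeightedHomogeneous.sum _ _ _ fun p hp => ?_
    have h := mem_antidiagonal.mp hp
    exact h ▸ (hF _ (by omega)).mul (hG _ (by omega))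
  one_mem' m _ := by
    rw [coeff_one]
    split_ifs with h
    · exact h ▸ MvPolynomial.isWeightedHomogeneous_one R w
    · exact MvPolynomial.isWeightedHomogeneous_zero R w m
  add_mem' hF hG m hm := by rw [map_add]; exact (hF m hm).add (hG m hm)
  zero_mem' m _ := by rw [map_zero]; exact MvPolynomial.isWeightedHomogeneous_zero R w m
  neg_mem' hF m hm := by rw [map_neg]; exact (hF m hm).neg

variable {w}

theorem X_mul_derivative_mem_weightedHomogeneousUpTo {N : ℕ} {F : (MvPolynomial σ R)⟦X⟧}
    (hF : F ∈ weightedHomogeneousUpTo w N) :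
    X * d⁄dX _ F ∈ weightedHomogeneousUpTo w N := fun m hm => by
  rw [PowerSeries.coeff_X_mul_derivative, ← map_natCast MvPolynomial.C]
  exact (hF m hm).C_mul _

theorem invOfUnit_mem_weightedHomogeneousUpTo {N : ℕ} {F : (MvPolynomial σ R)⟦X⟧}
    (hF : F ∈ weightedHomogeneousUpTo w N) :
    invOfUnit F 1 ∈ weightedHomogeneousUpTo w N := by
  intro m
  induction m using Nat.strong_induction_on with
  | _ m ih =>
    intro hm
    rw [coeff_invOfUnit]
    split_ifs with h0
    · simpa [h0] using MvPolynomial.isWeightedHomogeneous_one R w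
    · rw [inv_one, Units.val_one, neg_mul, one_mul]
      refine (MvPolynomial.IsWeightedHomogeneous.sum _ _ _ fun x hx => ?_).neg
      split_ifs with hlt
      · have h := mem_antidiagonal.mp hx
        exact h ▸ (hF _ (by omega)).mul (ih _ hlt (by omega))
      · exact MvPolynomial.isWeightedHomogeneous_zero R w m

variable (w) in
def linCoeff (i : σ) (F : (MvPolynomial σ R)⟦X⟧) : R :=
  MvPolynomial.coeff (Finsupp.single i 1) (coeff (w i) F)

theorem linCoeff_mul {i : σ} {F : (MvPolynomial σ R)⟦X⟧}
    (hF : F ∈ weightedHomogeneousUpTo w (w i)) (G : (MvPolynomial σ R)⟦X⟧) :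
    linCoeff w i (F * G) = linCoeff w i F * MvPolynomial.constantCoeff (constantCoeff G) +
      MvPolynomial.constantCoeff (constantCoeff F) * linCoeff w i G := by
  have hlin : ∀ a ≤ w i, a ≠ w i → MvPolynomial.coeff (Finsupp.single i 1) (coeff a F) = 0 :=
    fun a ha hne => (hF a ha).coeff_eq_zero _ (by rw [Finsupp.weight_single, one_smul]; omega)
  have hconst : ∀ a ≤ w i, a ≠ 0 → MvPolynomial.constantCoeff (coeff a F) = 0 :=
    fun a ha hne => (hF a ha).coeff_eq_zero 0 (by rwa [map_zero, ne_comm])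
  simp only [linCoeff, coeff_mul, MvPolynomial.coeff_sum, MvPolynomial.coeff_single_one_mul,
    sum_add_distrib, ← coeff_zero_eq_constantCoeff_apply]
  congr 1
  · refine sum_eq_single (w i, 0) (fun p hp hne => ?_) (by simp)
    have h := mem_antidiagonal.mp hp
    rw [hlin p.1 (by omega) (fun h1 => hne (Prod.ext h1 (by omega))), zero_mul]
  · refine sum_eq_single (0, w i) (fun p hp hne => ?_) (by simp)
    have h := mem_antidiagonal.mp hp
    rw [hconst p.1 (by omega) (fun h1 => hne (Prod.ext h1 (by omega))), zero_mul]

theorem linCoeff_X_mul_derivative (w : σ → ℕ) (i : σ) (F : (MvPolynomial σ R)⟦X⟧) :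
    linCoeff w i (X * d⁄dX _ F) = w i * linCoeff w i F := by
  rw [linCoeff, linCoeff, coeff_X_mul_derivative, ← map_natCast MvPolynomial.C,
    MvPolynomial.coeff_C_mul]

end WeightedHomogeneousSeries

section InverseSeries

variable {A B : Type*} [CommRing A] [CommRing B]

theorem PowerSeries.coeff_pow_eq_of_trunc_eq {f g : A⟦X⟧} {n d : ℕ} (h : trunc n f = trunc n g)
    (hd : d < n) (k : ℕ) : coeff d (f ^ k) = coeff d (g ^ k) := by
  have : trunc n (f ^ k) = trunc n (g ^ k) := by rw [← trunc_trunc_pow, h, trunc_trunc_pow]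
  simpa [coeff_trunc, hd] using congrArg (Polynomial.coeff · d) this

/-- `X * V` is the compositional inverse of `X + ∑ⱼ a j X^(j+2)`: this is the recursion obtained by
comparing coefficients of `t^(m+2)` in `U + ∑ⱼ a j U^(j+2) = t` for `U = X * V`. -/
def IsInvQuot (a : ℕ → A) (V : A⟦X⟧) : Prop :=
  coeff 0 V = 1 ∧ ∀ m, coeff (m + 1) V = -∑ j ∈ range (m + 1), a j * coeff (m - j) (V ^ (j + 2))

def invQuotCoeff (a : ℕ → A) : ℕ → A
  | 0 => 1
  | m + 1 => -∑ j ∈ range (m + 1), a j *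
      coeff (m - j) ((mk fun l => if l < m + 1 then invQuotCoeff a l else 0) ^ (j + 2))

def invQuot (a : ℕ → A) : A⟦X⟧ := mk (invQuotCoeff a)

theorem isInvQuot_invQuot (a : ℕ → A) : IsInvQuot a (invQuot a) := by
  refine ⟨by simp [invQuot, invQuotCoeff], fun m => ?_⟩
  rw [invQuot, coeff_mk, invQuotCoeff]
  congr 1
  refine sum_congr rfl fun j hj => ?_
  congr 1
  refine coeff_pow_eq_of_trunc_eq (n := m + 1) ?_ (by omega) _
  ext l
  simp only [coeff_trunc, coeff_mk]
  split_ifs <;> rfl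

theorem IsInvQuot.unique {a : ℕ → A} {V V' : A⟦X⟧} (hV : IsInvQuot a V) (hV' : IsInvQuot a V') :
    V = V' := by
  have htrunc : ∀ n, trunc (n + 1) V = trunc (n + 1) V' := by
    intro n
    induction n with
    | zero => ext l; simp [hV.1, hV'.1]
    | succ m ih =>
      rw [trunc_succ, trunc_succ V', ih, hV.2, hV'.2]
      congr 3
      exact sum_congr rfl fun j hj => by rw [coeff_pow_eq_of_trunc_eq ih (by omega)]
  ext n
  simpa [coeff_trunc] using congrArg (Polynomial.coeff · n) (htrunc n)

theorem IsInvQuot.map {a : ℕ → A} {V : A⟦X⟧} (hV : IsInvQuot a V) (f : A →+* B) :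
    IsInvQuot (f ∘ a) (map f V) := by
  refine ⟨by rw [coeff_map, hV.1, map_one], fun m => ?_⟩
  simp [coeff_map, hV.2, ← map_pow]

theorem coeff_succ_psComp_uSeries_X_mul (c : ℕ → ℂ) (V : ℂ⟦X⟧) (m : ℕ) :
    coeff (m + 1) (psComp (uSeries c) (X * V)) =
      coeff m V + ∑ j ∈ range m, c (j + 1) * coeff (m - 1 - j) (V ^ (j + 2)) := by
  rw [psComp, coeff_mk, sum_range_succ', sum_range_succ', add_assoc, add_comm]
  congr 1
  · simp [uSeries]
  · refine sum_congr rfl fun j hj => ?_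
    rw [mul_pow, coeff_X_pow_mul', if_pos (by simp at hj; omega)]
    simp [uSeries, show m + 1 - (j + 2) = m - 1 - j by omega]

theorem isInvQuot_of_psComp_uSeries {c : ℕ → ℂ} {V : ℂ⟦X⟧}
    (h : psComp (uSeries c) (X * V) = X) : IsInvQuot (fun j => c (j + 1)) V := by
  refine ⟨?_, fun m => ?_⟩
  · simpa [coeff_succ_psComp_uSeries_X_mul] using congrArg (coeff 1) h
  · have := congrArg (coeff (m + 2)) h
    rw [coeff_succ_psComp_uSeries_X_mul, coeff_X, if_neg (by omega)] at this
    simpa using eq_neg_of_add_eq_zero_left this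

theorem PowerSeries.map_derivative (f : A →+* B) (F : A⟦X⟧) :
    map f (d⁄dX A F) = d⁄dX B (map f F) := by
  ext n
  simp [coeff_derivative, coeff_map]

end InverseSeries

theorem tLS_zpow (k : ℤ) : tLS ^ k = HahnSeries.single k 1 := by
  rw [tLS, toLS, HahnSeries.ofPowerSeries_X]
  exact (RatFunc.single_zpow k).symm

/-- With `U = X * V` and `W = V'/V`, one has `U'/U = t⁻¹ (1 + t W)`, so the residue defining `P_n`
is the coefficient of `tⁿ` in `(1 + X * W)²`. -/
theorem Pres_X_mul {V W : ℂ⟦X⟧} (hV : V ≠ 0) (hW : W * V = d⁄dX ℂ V) (n : ℕ) :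
    Pres n (X * V) = coeff n ((1 + X * W) ^ 2) := by
  have ht : tLS ≠ 0 := by
    rw [← zpow_one tLS, tLS_zpow]
    exact HahnSeries.single_ne_zero one_ne_zero
  have hV' : toLS V ≠ 0 := fun h =>
    hV (HahnSeries.ofPowerSeries_injective (h.trans (map_zero _).symm))
  have htoLS_mul : ∀ F G : ℂ⟦X⟧, toLS (F * G) = toLS F * toLS G := map_mul _
  have hderiv : d⁄dX ℂ (X * V) = (1 + X * W) * V := by
    rw [Derivation.leibniz, derivative_X, add_mul, mul_assoc, hW, smul_eq_mul, smul_eq_mul,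
      mul_one, one_mul, add_comm]
  have hquot :
      toLS (d⁄dX ℂ (X * V)) / toLS (X * V) = toLS (1 + X * W) * tLS ^ (-1 : ℤ) := by
    rw [hderiv, htoLS_mul, htoLS_mul, ← tLS, zpow_neg_one]
    field_simp
  have hsq : (toLS (1 + X * W) * tLS ^ (-1 : ℤ)) ^ 2 * tLS ^ (1 - (n : ℤ)) =
      HahnSeries.ofPowerSeries ℤ ℂ ((1 + X * W) ^ 2) * HahnSeries.single (-((n : ℤ) + 1)) 1 := by
    rw [mul_pow, ← zpow_natCast (tLS ^ (-1 : ℤ)) 2, ← zpow_mul, mul_assoc, ← zpow_add₀ ht,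
      tLS_zpow, toLS, map_pow]
    congr 3
    push_cast
    ring
  change ((toLS (d⁄dX ℂ (X * V)) / toLS (X * V)) ^ 2 * tLS ^ (1 - (n : ℤ))).coeff (-1) = _
  rw [hquot, hsq, show (-1 : ℤ) = n + -((n : ℤ) + 1) by ring,
    HahnSeries.coeff_mul_single_add, mul_one, HahnSeries.ofPowerSeries_apply_coeff]

section Universal

variable (R : Type*) [CommRing R]

/-- The variable `Xⱼ` stands for `u_{j+1}`. -/
def univInvQuot : (MvPolynomial ℕ R)⟦X⟧ := invQuot MvPolynomial.X

def univLogDeriv : (MvPolynomial ℕ R)⟦X⟧ :=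
  d⁄dX _ (univInvQuot R) * invOfUnit (univInvQuot R) 1

/-- The polynomial in the `u_{j+1}` giving `P_{k+1}` (see `Pres_X_mul`). -/
def presPoly (k : ℕ) : MvPolynomial ℕ R := coeff (k + 1) ((1 + X * univLogDeriv R) ^ 2)

variable {R}

theorem isInvQuot_univInvQuot : IsInvQuot MvPolynomial.X (univInvQuot R) :=
  isInvQuot_invQuot _

theorem constantCoeff_univInvQuot : constantCoeff (univInvQuot R) = 1 := by
  rw [← coeff_zero_eq_constantCoeff_apply]
  exact isInvQuot_univInvQuot.1

theorem univInvQuot_mem (N : ℕ) :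
    univInvQuot R ∈ weightedHomogeneousUpTo (fun j => j + 1) N := by
  induction N with
  | zero =>
    intro m hm
    rw [Nat.le_zero.mp hm, isInvQuot_univInvQuot.1]
    exact MvPolynomial.isWeightedHomogeneous_one R _
  | succ N ih =>
    intro m hm
    rcases Nat.le_succ_iff.mp hm with hm | rfl
    · exact ih m hm
    rw [isInvQuot_univInvQuot.2 N]
    refine (MvPolynomial.IsWeightedHomogeneous.sum _ _ _ fun j hj => ?_).neg
    have h := (MvPolynomial.isWeightedHomogeneous_X R (fun j : ℕ => j + 1) j).mul
      (pow_mem ih (j + 2) (N - j) (Nat.sub_le N j))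
    rwa [show j + 1 + (N - j) = N + 1 by simp at hj; omega] at h

theorem X_mul_univLogDeriv_mem (N : ℕ) :
    X * univLogDeriv R ∈ weightedHomogeneousUpTo (fun j => j + 1) N := by
  rw [univLogDeriv, ← mul_assoc]
  exact mul_mem (X_mul_derivative_mem_weightedHomogeneousUpTo (univInvQuot_mem N))
    (invOfUnit_mem_weightedHomogeneousUpTo (univInvQuot_mem N))

theorem presPoly_isWeightedHomogeneous (k : ℕ) :
    (presPoly R k).IsWeightedHomogeneous (fun j => j + 1) (k + 1) :=
  pow_mem (add_mem (one_mem _) (X_mul_univLogDeriv_mem (k + 1))) 2 (k + 1) le_rfl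

theorem linCoeff_univInvQuot (k : ℕ) : linCoeff (fun j => j + 1) k (univInvQuot R) = -1 := by
  rw [linCoeff, isInvQuot_univInvQuot.2 k, MvPolynomial.coeff_neg, MvPolynomial.coeff_sum,
    sum_eq_single k]
  · simp [MvPolynomial.coeff_X, constantCoeff_univInvQuot]
  · intro j _ hj
    simp [MvPolynomial.coeff_single_one_mul, MvPolynomial.coeff_X, Finsupp.single_left_inj, hj]
  · simp

theorem coeff_single_presPoly (k : ℕ) :
    MvPolynomial.coeff (Finsupp.single k 1) (presPoly R k) = -(2 * (k + 1)) := by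
  have hXW := X_mul_univLogDeriv_mem (R := R) (k + 1)
  have hlin : linCoeff (fun j => j + 1) k (X * univLogDeriv R) = -((k : R) + 1) := by
    rw [univLogDeriv, ← mul_assoc,
      linCoeff_mul (X_mul_derivative_mem_weightedHomogeneousUpTo (univInvQuot_mem _)),
      linCoeff_X_mul_derivative, linCoeff_univInvQuot]
    simp
  have hG : linCoeff (fun j => j + 1) k (1 + X * univLogDeriv R) = -((k : R) + 1) := by
    unfold linCoeff at hlin ⊢
    rw [map_add, MvPolynomial.coeff_add, hlin, coeff_one, if_neg k.succ_ne_zero]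
    simp
  change linCoeff (fun j => j + 1) k ((1 + X * univLogDeriv R) ^ 2) = _
  rw [sq, linCoeff_mul (add_mem (one_mem _) hXW), hG]
  simp
  ring

theorem Pres_X_mul_eq_aeval_presPoly {c : ℕ → ℂ} {V : ℂ⟦X⟧} (h : psComp (uSeries c) (X * V) = X)
    (k : ℕ) : Pres (k + 1) (X * V) = MvPolynomial.aeval (fun j => c (j + 1)) (presPoly ℚ k) := by
  set φ : MvPolynomial ℕ ℚ →+* ℂ := (MvPolynomial.aeval fun j => c (j + 1)).toRingHom
  have hV : map φ (univInvQuot ℚ) = V := by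
    refine IsInvQuot.unique ?_ (isInvQuot_of_psComp_uSeries h)
    simpa [φ, Function.comp_def] using isInvQuot_univInvQuot.map φ
  have hV0 : V ≠ 0 := fun h0 => by
    have := congrArg (coeff 0) h0
    rw [← hV, coeff_map, isInvQuot_univInvQuot.1, map_one, map_zero] at this
    exact one_ne_zero this
  have hinv : map φ (invOfUnit (univInvQuot ℚ) 1) * V = 1 := by
    rw [← hV, ← map_mul, invOfUnit_mul _ _ (by simp [constantCoeff_univInvQuot]), map_one]
  have hW : map φ (univLogDeriv ℚ) * V = d⁄dX ℂ V := by
    rw [univLogDeriv, map_mul, map_derivative, hV, mul_assoc, hinv, mul_one]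
  rw [Pres_X_mul hV0 hW, presPoly,
    show (1 + X * map φ (univLogDeriv ℚ)) ^ 2 = map φ ((1 + X * univLogDeriv ℚ) ^ 2) by simp,
    coeff_map]
  rfl

theorem Pres_succ_eq_aeval_presPoly {c : ℕ → ℂ} {U : ℂ⟦X⟧} (hU0 : constantCoeff U = 0)
    (hcomp : psComp (uSeries c) U = X) (k : ℕ) :
    Pres (k + 1) U = MvPolynomial.aeval (fun j => c (j + 1)) (presPoly ℚ k) := by
  obtain ⟨V, rfl⟩ := X_dvd_iff.mpr hU0
  exact Pres_X_mul_eq_aeval_presPoly hcomp k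

theorem eq_aeval_Pres_of_aeval_presPoly_eq_X {q : MvPolynomial ℕ ℚ} {k : ℕ}
    (hq : MvPolynomial.aeval (presPoly ℚ) q = MvPolynomial.X k) {c : ℕ → ℂ} {U : ℂ⟦X⟧}
    (hU0 : constantCoeff U = 0) (hcomp : psComp (uSeries c) U = X) :
    c (k + 1) = MvPolynomial.aeval (fun j => Pres (j + 1) U) q := by
  have := congrArg (MvPolynomial.aeval fun j => c (j + 1)) hq
  rw [MvPolynomial.aeval_eq_bind₁ (presPoly ℚ), MvPolynomial.aeval_bind₁, MvPolynomial.aeval_X]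
    at this
  simpa only [← Pres_succ_eq_aeval_presPoly hU0 hcomp] using this.symm

end Universal

theorem exists_aeval_eq_X {K : Type*} [Field K] {p : ℕ → MvPolynomial ℕ K} {a : ℕ → K}
    (hp : ∀ k, (p k).IsWeightedHomogeneous (fun j => j + 1) (k + 1))
    (ha : ∀ k, MvPolynomial.coeff (Finsupp.single k 1) (p k) = a k) (ha0 : ∀ k, a k ≠ 0)
    (k : ℕ) : ∃ q : MvPolynomial ℕ K, q.IsWeightedHomogeneous (fun j => j + 1) (k + 1) ∧
      MvPolynomial.coeff (Finsupp.single k 1) q = (a k)⁻¹ ∧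
      MvPolynomial.aeval p q = MvPolynomial.X k := by
  classical
  induction k using Nat.strong_induction_on with
  | _ k ih =>
  choose! q hq_hom _ hq_eval using ih
  set s : ℕ → MvPolynomial ℕ K := fun j => if j < k then q j else 0
  set r := p k - MvPolynomial.C (a k) * MvPolynomial.X k
  have hr_hom : r.IsWeightedHomogeneous (fun j => j + 1) (k + 1) :=
    (hp k).sub ((MvPolynomial.isWeightedHomogeneous_X K _ k).C_mul (a k))
  have hr_vars : r.vars ⊆ range k := hr_hom.vars_subset_range_of_coeff_single_eq_zero (by
    simp [r, ha, MvPolynomial.coeff_X])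
  have hs_hom (j : ℕ) : (s j).IsWeightedHomogeneous (fun j => j + 1) (j + 1) := by
    by_cases hj : j < k
    · simpa [s, hj] using hq_hom j hj
    · simpa [s, hj] using MvPolynomial.isWeightedHomogeneous_zero K _ (j + 1)
  have hsr : MvPolynomial.coeff (Finsupp.single k 1) (MvPolynomial.aeval s r) = 0 := by
    by_contra h
    have hk : k ∉ (MvPolynomial.aeval s r).vars := fun hk => by
      rw [MvPolynomial.aeval_eq_bind₁] at hk
      obtain ⟨j, hj, hkj⟩ := mem_biUnion.mp (MvPolynomial.vars_bind₁ s r hk)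
      have := mem_range.mp ((hs_hom j).vars_subset_range hkj)
      have := mem_range.mp (hr_vars hj)
      omega
    simpa using
      MvPolynomial.mem_support_notMem_vars_zero (MvPolynomial.mem_support_iff.mpr h) hk
  have hpsr : MvPolynomial.aeval p (MvPolynomial.aeval s r) = r :=
    MvPolynomial.aeval_aeval_eq_self fun j hj => by
      have hjk := mem_range.mp (hr_vars hj)
      simpa [s, hjk] using hq_eval j hjk
  refine ⟨MvPolynomial.C (a k)⁻¹ * (MvPolynomial.X k - MvPolynomial.aeval s r), ?_, ?_, ?_⟩
  · exact ((MvPolynomial.isWeightedHomogeneous_X K _ k).sub (hr_hom.aeval hs_hom)).C_mul _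
  · rw [MvPolynomial.coeff_C_mul, MvPolynomial.coeff_sub, MvPolynomial.coeff_X, hsr, sub_zero,
      if_pos rfl, mul_one]
  · rw [map_mul, map_sub, hpsr, MvPolynomial.aeval_X, MvPolynomial.aeval_C, sub_sub_cancel,
      ← mul_assoc, MvPolynomial.algebraMap_eq, ← map_mul, inv_mul_cancel₀ (ha0 k), map_one, one_mul]

theorem exists_rename_finVal {R : Type*} [CommSemiring R] {p : MvPolynomial ℕ R} {n : ℕ}
    (hp : p.IsWeightedHomogeneous (fun j => j + 1) n) :
    ∃ Q : MvPolynomial (Fin n) R, MvPolynomial.rename Fin.val Q = p ∧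
      Q.IsWeightedHomogeneous (fun j : Fin n => (j : ℕ) + 1) n := by
  obtain ⟨Q, hQ⟩ := MvPolynomial.exists_rename_eq_of_vars_subset_range p Fin.val
    Fin.val_injective fun i hi => ⟨⟨i, mem_range.mp (hp.vars_subset_range hi)⟩, rfl⟩
  exact ⟨Q, hQ, (hQ ▸ hp).of_rename Fin.val_injective⟩

theorem aeval_mem_adjoin_range_fin {R A : Type*} [CommSemiring R] [CommSemiring A]
    [Algebra R A] {p : MvPolynomial ℕ R} {n : ℕ} (hp : p.vars ⊆ range n) (g : ℕ → A) :
    MvPolynomial.aeval g p ∈ Algebra.adjoin R (Set.range fun j : Fin n => g j) := by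
  obtain ⟨Q, rfl⟩ := MvPolynomial.exists_rename_eq_of_vars_subset_range p Fin.val
    Fin.val_injective fun i hi => ⟨⟨i, mem_range.mp (hp hi)⟩, rfl⟩
  rw [MvPolynomial.aeval_rename, Algebra.adjoin_range_eq_range_aeval]
  exact ⟨Q, rfl⟩

/-- **(Proposition 3.4(c,d).)**  `u_n` is a polynomial with rational coefficients in
`P_1, …, P_n` (variable `j : Fin n` standing for `P_{j+1}`), weighted homogeneous of
degree `n` when `P_j` has degree `j`, of the form
`u_n = -(1/(2n))·P_n + (terms involving only P_1, …, P_{n-1})`.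
Consequently `ℚ[P_1,…,P_n] = ℚ[u_1,…,u_n]` (as subalgebras of `ℂ`, for each `u`). -/
theorem un_is_rational_polynomial_in_Pn (n : ℕ) (hn : 1 ≤ n) :
    (∃ Q : MvPolynomial (Fin n) ℚ,
      Q.IsWeightedHomogeneous (fun j : Fin n => (j : ℕ) + 1) n ∧
      (∃ Q' : MvPolynomial (Fin n) ℚ,
        (⟨n - 1, Nat.sub_lt hn one_pos⟩ : Fin n) ∉ Q'.vars ∧
        Q = (-(1 / (2 * (n : ℚ)))) • MvPolynomial.X ⟨n - 1, Nat.sub_lt hn one_pos⟩ + Q') ∧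
      ∀ (c : ℕ → ℂ) (U : PowerSeries ℂ),
        PowerSeries.constantCoeff U = 0 →
        psComp (uSeries c) U = PowerSeries.X →
        c n = MvPolynomial.aeval (fun j : Fin n => Pres ((j : ℕ) + 1) U) Q) ∧
    ∀ (c : ℕ → ℂ) (U : PowerSeries ℂ),
      PowerSeries.constantCoeff U = 0 →
      psComp (uSeries c) U = PowerSeries.X →
      Algebra.adjoin ℚ (Set.range fun j : Fin n => Pres ((j : ℕ) + 1) U) =
        Algebra.adjoin ℚ (Set.range fun j : Fin n => c ((j : ℕ) + 1)) := by
  choose q hq_hom hq_coeff hq_eval using exists_aeval_eq_X presPoly_isWeightedHomogeneous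
    coeff_single_presPoly fun k => neg_ne_zero.mpr (by positivity : 2 * ((k : ℚ) + 1) ≠ 0)
  refine ⟨?_, fun c U hU0 hcomp => le_antisymm (Algebra.adjoin_le ?_) (Algebra.adjoin_le ?_)⟩
  · obtain ⟨k, rfl⟩ : ∃ k, n = k + 1 := ⟨n - 1, by omega⟩
    obtain ⟨Q, hQ, hQ_hom⟩ := exists_rename_finVal (hq_hom k)
    have hQ_coeff : MvPolynomial.coeff (Finsupp.single (Fin.last k) 1) Q =
        -(1 / (2 * ((k + 1 : ℕ) : ℚ))) := by
      rw [← MvPolynomial.coeff_rename_mapDomain Fin.val Fin.val_injective,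
        Finsupp.mapDomain_single, hQ, Fin.val_last, hq_coeff, inv_neg, one_div, Nat.cast_add_one]
    refine ⟨Q, hQ_hom, ⟨_, hQ_hom.notMem_vars_add_smul_X (fun j => j.val.succ_ne_zero) hQ_coeff,
      by rw [neg_smul]; abel⟩, fun c U hU0 hcomp => ?_⟩
    rw [eq_aeval_Pres_of_aeval_presPoly_eq_X (hq_eval k) hU0 hcomp, ← hQ,
      MvPolynomial.aeval_rename]
    rfl
  · rintro _ ⟨j, rfl⟩
    dsimp only
    rw [SetLike.mem_coe, Pres_succ_eq_aeval_presPoly hU0 hcomp]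
    exact aeval_mem_adjoin_range_fin ((presPoly_isWeightedHomogeneous j).vars_subset_range.trans
      (range_subset_range.mpr j.isLt)) fun i => c (i + 1)
  · rintro _ ⟨j, rfl⟩
    dsimp only
    rw [SetLike.mem_coe, eq_aeval_Pres_of_aeval_presPoly_eq_X (hq_eval j) hU0 hcomp]
    exact aeval_mem_adjoin_range_fin ((hq_hom j).vars_subset_range.trans
      (range_subset_range.mpr j.isLt)) fun i => Pres (i + 1) U

end
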